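/- Let f(y) := y²·(2−3y)/(1−2y). For every real m with 0 < m < 1/2, the following three conditions are equivalent: (i) (f(m) + 2m²(1−m)) / ((1−m) + f(m) + 2m(1−m)) ≤ m; (ii) f(m) ≤ m; (iii) m ≤ 1/3. (This is the chain of equivalences in the proof of Theorem 2(1): a pool of power m gains by unilaterally deviating from all-honest mining to insightful mining if and only if m > 1/3.) -/

import Mathlib

noncomputable def f (y : ℝ) : ℝ := y^2 * (2 - 3*y) / (1 - 2*y)

lemma f_pos {y : ℝ} (h0 : 0 < y) (h1 : y < 1/2) : 0 < f y := by
  unfold f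
  have : 0 < 2 - 3*y := by linarith
  exact div_pos (by positivity) (by linarith)

lemma add_mul_div_le_iff_le {x m k : ℝ} (hm : m < 1) (hD : 0 < (1 - m) + x + k) :
    (x + m*k) / ((1 - m) + x + k) ≤ m ↔ x ≤ m := by
  calc (x + m*k) / ((1 - m) + x + k) ≤ m ↔ (1 - m) * x ≤ (1 - m) * m := by
        rw [div_le_iff₀ hD]
        constructor <;> intro h <;> linarith
    _ ↔ x ≤ m := mul_le_mul_iff_of_pos_left (sub_pos.mpr hm)

lemma f_le_self_iff {m : ℝ} (h0 : 0 < m) (h1 : m < 1/2) : f m ≤ m ↔ m ≤ 1/3 := by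
  have h1m : 0 < 1 - m := by linarith
  calc f m ≤ m ↔ m * (m * (2 - 3*m)) ≤ m * (1 - 2*m) := by
        unfold f
        rw [div_le_iff₀ (by linarith)]
        constructor <;> intro h <;> linarith
    _ ↔ 0 ≤ (1 - m) * (1 - 3*m) := by
        rw [mul_le_mul_iff_of_pos_left h0]
        constructor <;> intro h <;> linarith
    _ ↔ m ≤ 1/3 := by
        rw [mul_nonneg_iff_of_pos_left h1m]
        constructor <;> intro h <;> linarith

/-- For `0 < m < 1/2`, the three conditions
(i) `(f(m)+2m²(1−m))/((1−m)+f(m)+2m(1−m)) ≤ m`, (ii) `f(m) ≤ m`, (iii) `m ≤ 1/3`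
are equivalent. -/
theorem deviation_equivalences (m : ℝ) (h0 : 0 < m) (h1 : m < 1/2) :
    [(f m + 2*m^2*(1 - m)) / ((1 - m) + f m + 2*m*(1 - m)) ≤ m,
     f m ≤ m,
     m ≤ 1/3].TFAE := by
  have hD : 0 < (1 - m) + f m + 2*m*(1 - m) := by
    have := f_pos h0 h1
    nlinarith
  tfae_have 1 ↔ 2 := by
    rw [← add_mul_div_le_iff_le (by linarith) hD]
    ring_nf
  tfae_have 2 ↔ 3 := f_le_self_iff h0 h1
  tfae_finish
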